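/- arXiv:1108.3626 — 4 statements merged into one kernel-verified Lean document; each statement's English description precedes it below -/
import Mathlib

section
/- Let Q and D be finite alphabets with |D| ≥ 2, let 0 ∈ D be a distinguished letter, and let m ≥ 3. Let [·] : Q → D^m be an injective map such that for every q ∈ Q the word [q] ends with the suffix 00 and the factor 00 occurs in [q] at no other position. Then [·] is a factor-decodable code. -/
/-- A code of `Q` into `D` of length `m`: an injective map sending each state to
a word of length `m`. -/
def IsCode {Q D : Type} (m : ℕ) (c : Q → List D) : Prop :=
  Function.Injective c ∧ ∀ q, (c q).length = m

/-- A word `x ∈ D^{2m-1}` is factor-decodable: there is exactly one position `j`,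
`1 ≤ j ≤ m`, such that the factor of `x` of length `m` starting at position `j`
is a codeword. -/
def FactorDecodableWord {Q D : Type} (m : ℕ) (c : Q → List D) (x : List D) : Prop :=
  ∃! j : ℕ, 1 ≤ j ∧ j ≤ m ∧ ∃ q : Q, (x.drop (j - 1)).take m = c q

/-- The code `c` is factor-decodable: every factor of length `2m-1` of every
concatenation of codewords is factor-decodable. -/
def IsFactorDecodableCode {Q D : Type} (m : ℕ) (c : Q → List D) : Prop :=
  IsCode m c ∧
  ∀ l : List Q, l ≠ [] → ∀ x : List D, x.length = 2 * m - 1 →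
    x <:+: (l.map c).flatten → FactorDecodableWord m c x

/-! Call an occurrence of `zz` a marker. In a concatenation `w` of codewords, a marker whose
position has residue at most `m - 2` modulo `m` lies inside a single codeword, so it is that
codeword's final marker. A codeword occurring in `w` at a position `t` that is not a multiple of
`m` then yields a contradiction: if `t % m ≤ m - 2`, the final marker of the codeword of `w`
containing position `t` falls inside the occurrence before its own final marker; if
`t % m = m - 1`, the occurrence's final marker sits at offset `m - 3` of the next codeword of `w`.
So the codeword occurrences in `w` are exactly at the multiples of `m`, and a window of length
`2m - 1` has exactly one of them among its first `m` positions. -/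

namespace List

variable {α : Type*}

theorem drop_mul_flatten {L : List (List α)} {m : ℕ} (hL : ∀ u ∈ L, u.length = m) (k : ℕ) :
    L.flatten.drop (m * k) = (L.drop k).flatten := by
  induction k generalizing L with
  | zero => simp
  | succ k ih =>
    cases L with
    | nil => simp
    | cons u L =>
      rw [flatten_cons, Nat.mul_succ, Nat.add_comm, ← drop_drop, drop_left' (hL u mem_cons_self),
        ih fun v hv => hL v (mem_cons_of_mem u hv), drop_succ_cons]

theorem take_drop_mul_flatten {L : List (List α)} {m : ℕ} (hL : ∀ u ∈ L, u.length = m) {k : ℕ}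
    (hk : k < L.length) : (L.flatten.drop (m * k)).take m = L[k] := by
  rw [drop_mul_flatten hL, drop_eq_getElem_cons hk, flatten_cons,
    take_left' (hL _ (getElem_mem hk))]

theorem length_flatten_of_forall_length_eq {L : List (List α)} {m : ℕ}
    (hL : ∀ u ∈ L, u.length = m) : L.flatten.length = m * L.length := by
  rw [length_flatten, map_congr_left hL, map_const', sum_replicate_nat, Nat.mul_comm]

theorem take_drop_take_drop_of_add_le (w : List α) {t n e k : ℕ} (h : e + k ≤ n) :
    (((w.drop t).take n).drop e).take k = (w.drop (t + e)).take k := by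
  rw [drop_take, drop_drop, take_take, Nat.min_eq_left (by omega)]

theorem IsInfix.exists_eq_take_drop {x w : List α} (h : x <:+: w) :
    ∃ p, p + x.length ≤ w.length ∧ x = (w.drop p).take x.length := by
  obtain ⟨s, t, rfl⟩ := h
  exact ⟨s.length, by simp, by simp⟩

end List

theorem Nat.existsUnique_dvd_add_sub_one {m : ℕ} (hm : 0 < m) (p : ℕ) :
    ∃! j, 1 ≤ j ∧ j ≤ m ∧ m ∣ p + (j - 1) := by
  have hwit : m ∣ p + (m - p % m) % m := by
    have hp := Nat.div_add_mod p m
    have hlt := Nat.mod_lt p hm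
    rw [Nat.dvd_iff_mod_eq_zero, Nat.add_mod, Nat.mod_mod, ← Nat.add_mod,
      show p + (m - p % m) = m * (p / m + 1) by rw [Nat.mul_succ]; omega, Nat.mul_mod_right]
  refine ⟨(m - p % m) % m + 1, ⟨by omega, Nat.mod_lt _ hm, by simpa using hwit⟩, ?_⟩
  rintro j ⟨hj1, hjm, hdvd⟩
  have hmod : p + (j - 1) ≡ p + (m - p % m) % m [MOD m] :=
    (Nat.modEq_zero_iff_dvd.mpr hdvd).trans (Nat.modEq_zero_iff_dvd.mpr hwit).symm
  have := (Nat.ModEq.add_left_cancel' p hmod).eq_of_lt_of_lt (by omega) (Nat.mod_lt _ hm)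
  omega

structure MarkedBySuffixZZ {Q D : Type} (z : D) (m : ℕ) (c : Q → List D) : Prop where
  length_eq : ∀ q, (c q).length = m
  drop_eq : ∀ q, (c q).drop (m - 2) = [z, z]
  eq_sub_two_of_take_drop_eq :
    ∀ q, ∀ i : ℕ, i + 2 ≤ m → ((c q).drop i).take 2 = [z, z] → i = m - 2

namespace MarkedBySuffixZZ

variable {Q D : Type} {z : D} {m : ℕ} {c : Q → List D}

theorem length_flatten_map (hc : MarkedBySuffixZZ z m c) (l : List Q) :
    ((l.map c).flatten).length = m * l.length := by
  rw [List.length_flatten_of_forall_length_eq (m := m) (by simp [hc.length_eq]), List.length_map]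

theorem take_drop_mul_flatten_map (hc : MarkedBySuffixZZ z m c) {l : List Q} {k : ℕ}
    (hk : k < l.length) : (((l.map c).flatten).drop (m * k)).take m = c l[k] := by
  rw [List.take_drop_mul_flatten (by simp [hc.length_eq]) (by simpa using hk), List.getElem_map]

theorem take_drop_add_sub_two_eq (hc : MarkedBySuffixZZ z m c) (hm : 2 ≤ m) {w : List D}
    {t : ℕ} {q : Q} (hq : (w.drop t).take m = c q) :
    (w.drop (t + (m - 2))).take 2 = [z, z] := by
  rw [← List.take_drop_take_drop_of_add_le w (by omega : m - 2 + 2 ≤ m), hq, hc.drop_eq]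
  rfl

theorem eq_add_sub_two_of_take_drop_eq (hc : MarkedBySuffixZZ z m c) {w : List D} {t s : ℕ}
    {q : Q} (hq : (w.drop t).take m = c q) (hts : t ≤ s) (hs : s + 2 ≤ t + m)
    (hzz : (w.drop s).take 2 = [z, z]) : s = t + (m - 2) := by
  have := hc.eq_sub_two_of_take_drop_eq q (s - t) (by omega)
    (by rw [← hq, List.take_drop_take_drop_of_add_le w (by omega), Nat.add_sub_cancel' hts, hzz])
  omega

theorem mod_eq_of_take_drop_flatten_eq (hc : MarkedBySuffixZZ z m c) {l : List Q} {i : ℕ}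
    (hzz : (((l.map c).flatten).drop i).take 2 = [z, z]) (hi : i % m + 2 ≤ m) :
    i % m = m - 2 := by
  have hil : i < m * l.length := by
    by_contra! h
    rw [List.drop_eq_nil_of_le ((hc.length_flatten_map l).trans_le h)] at hzz
    simp at hzz
  have hdm := Nat.div_add_mod i m
  have := hc.eq_add_sub_two_of_take_drop_eq (s := i) (hc.take_drop_mul_flatten_map
    (Nat.div_lt_of_lt_mul hil)) (by omega) (by omega) hzz
  omega

theorem dvd_of_take_drop_flatten_eq (hc : MarkedBySuffixZZ z m c) (hm : 3 ≤ m) {l : List Q}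
    {t : ℕ} {q : Q} (hq : (((l.map c).flatten).drop t).take m = c q) : m ∣ t := by
  have htw : t + m ≤ m * l.length := by
    have := congrArg List.length hq
    rw [List.length_take, List.length_drop, hc.length_eq, hc.length_flatten_map] at this
    omega
  have hdm := Nat.div_add_mod t m
  have hr : t % m < m := Nat.mod_lt t (by omega)
  rw [Nat.dvd_iff_mod_eq_zero]
  by_contra hr0
  rcases Nat.lt_or_ge (t % m) (m - 1) with hsmall | hlast
  · have hmark := hc.take_drop_add_sub_two_eq (by omega)
      (hc.take_drop_mul_flatten_map (Nat.div_lt_of_lt_mul (by omega : t < m * l.length)))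
    have := hc.eq_add_sub_two_of_take_drop_eq hq (by omega) (by omega) hmark
    omega
  · have hres : (t + (m - 2)) % m = m - 3 := by
      rw [show t + (m - 2) = m * (t / m + 1) + (m - 3) by rw [Nat.mul_succ]; omega,
        Nat.mul_add_mod, Nat.mod_eq_of_lt (by omega)]
    have := hc.mod_eq_of_take_drop_flatten_eq (hc.take_drop_add_sub_two_eq (by omega) hq)
      (by omega)
    omega

theorem exists_take_drop_flatten_eq_iff (hc : MarkedBySuffixZZ z m c) (hm : 3 ≤ m) (l : List Q)
    {t : ℕ} (ht : t + m ≤ ((l.map c).flatten).length) :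
    (∃ q, (((l.map c).flatten).drop t).take m = c q) ↔ m ∣ t := by
  refine ⟨fun ⟨q, hq⟩ => hc.dvd_of_take_drop_flatten_eq hm hq, ?_⟩
  rintro ⟨k, rfl⟩
  rw [hc.length_flatten_map] at ht
  have hk : k < l.length := by
    by_contra! h
    nlinarith
  exact ⟨_, hc.take_drop_mul_flatten_map hk⟩

end MarkedBySuffixZZ

theorem factor_decodable_of_suffix_00_general {Q D : Type}
    (z : D) (m : ℕ) (hm : 3 ≤ m)
    (c : Q → List D) (hinj : Function.Injective c)
    (hlen : ∀ q, (c q).length = m)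
    (hsuf : ∀ q, (c q).drop (m - 2) = [z, z])
    (honly : ∀ q, ∀ i : ℕ, i + 2 ≤ m → ((c q).drop i).take 2 = [z, z] → i = m - 2) :
    IsFactorDecodableCode m c := by
  have hc : MarkedBySuffixZZ z m c := ⟨hlen, hsuf, honly⟩
  refine ⟨⟨hinj, hlen⟩, fun l _ x hx hxw => ?_⟩
  obtain ⟨p, hpw, hxp⟩ := hxw.exists_eq_take_drop
  rw [hx] at hpw hxp
  have hwindow : ∀ j, 1 ≤ j → j ≤ m →
      ((∃ q, (x.drop (j - 1)).take m = c q) ↔ m ∣ p + (j - 1)) := by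
    intro j hj1 hjm
    rw [hxp, List.take_drop_take_drop_of_add_le _ (by omega)]
    refine hc.exists_take_drop_flatten_eq_iff hm l ?_
    omega
  refine (existsUnique_congr fun j => ?_).mpr
    (Nat.existsUnique_dvd_add_sub_one (by omega : 0 < m) p)
  exact and_congr_right fun hj1 => and_congr_right fun hjm => hwindow j hj1 hjm

/-- Let `Q, D` be finite alphabets with `|D| ≥ 2` and a
distinguished letter `z ∈ D` (playing the role of `0`), and `m ≥ 3`. If every
codeword `[q]` (of length `m`) ends with the suffix `00` and the factor `00`
occurs in `[q]` at no other position, then the (injective) code `[·]` is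
factor-decodable. -/
theorem factor_decodable_of_suffix_00 {Q D : Type} [Fintype Q] [Fintype D]
    (hD : 2 ≤ Fintype.card D) (z : D) (m : ℕ) (hm : 3 ≤ m)
    (c : Q → List D) (hinj : Function.Injective c)
    (hlen : ∀ q, (c q).length = m)
    (hsuf : ∀ q, (c q).drop (m - 2) = [z, z])
    (honly : ∀ q, ∀ i : ℕ, i + 2 ≤ m → ((c q).drop i).take 2 = [z, z] → i = m - 2) :
    IsFactorDecodableCode m c :=
  factor_decodable_of_suffix_00_general z m hm c hinj hlen hsuf honly
end

section
/- Let D be a finite alphabet of cardinality h ≥ 2 with a distinguished letter 0 ∈ D, and for m ≥ 2 let S(m) ⊆ D^m be the set of words ending with the suffix 00 in which the factor 00 occurs at no other position. Then for every integer n ≥ 2 with h < n, setting m = ⌈g(h) + f(h)·log₂ n⌉, one has |S(m)| ≥ n. -/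
/-!
A word of `S(m)` is `u ++ 00` where `u` has no factor `00` and does not end in `0`. Sorting such
`u` by their last letters gives the recurrence `a (k + 2) = (h - 1) (a (k + 1) + a k)`, whose
Binet formula is `a k · s = x ^ (k + 1) - y ^ (k + 1)` with `x, y = (h - 1 ± s) / 2` and
`s = √((h - 1)(h + 3))`. Now `f h = 1 / log₂ x` and `g h = 1 + f h · log₂ s`, so
`m - 1 ≥ log_x (s n)`, i.e. `x ^ (m - 1) ≥ s n`; as `|y| ≤ 1 < s`, this gives `a (m - 2) > n - 1`.
-/

/-- The set `S(m) ⊆ D^m` of words of length `m` ending with the suffix `00`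
(where `0` is the distinguished letter `z`) and in which the factor `00` occurs
at no other position. -/
def Sset {D : Type} (z : D) (m : ℕ) : Set (List D) :=
  {w | w.length = m ∧ w.drop (m - 2) = [z, z] ∧
    ∀ i : ℕ, i + 2 ≤ m → (w.drop i).take 2 = [z, z] → i = m - 2}

/-- The function `f` of the paper. -/
noncomputable def fFun (h : ℝ) : ℝ :=
  (Real.logb 2 (h - 1 + Real.sqrt ((h - 1) * (h + 3))) - 1)⁻¹

/-- The function `g` of the paper. -/
noncomputable def gFun (h : ℝ) : ℝ :=
  1 + (fFun h / 2) * (Real.logb 2 (h - 1) + Real.logb 2 (h + 3))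

open Real

def pairFreeCount (r : ℕ) : ℕ → ℕ
  | 0 => 1
  | 1 => r
  | k + 2 => r * (pairFreeCount r (k + 1) + pairFreeCount r k)

theorem pairFreeCount_mul_sub_eq (r : ℕ) {x y : ℝ} (hsum : x + y = r) (hprod : x * y = -r)
    (k : ℕ) :
    pairFreeCount r k * (x - y) = x ^ (k + 1) - y ^ (k + 1) := by
  have hx : x ^ 2 = r * x + r := by linear_combination x * hsum - hprod
  have hy : y ^ 2 = r * y + r := by linear_combination y * hsum - hprod
  induction k using Nat.twoStepInduction with
  | zero => simp [pairFreeCount]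
  | one => simp only [pairFreeCount]; linear_combination (y - x) * hsum
  | more k ih₀ ih₁ =>
    simp only [pairFreeCount, Nat.cast_mul, Nat.cast_add]
    linear_combination r * ih₁ + r * ih₀ - x ^ (k + 1) * hx + y ^ (k + 1) * hy

-- `rootPlus r` and `rootMinus r` are the roots of `t ^ 2 - r t - r`, the characteristic polynomial
-- of `pairFreeCount r`.
noncomputable def sqrtDisc (r : ℝ) : ℝ := √(r * (r + 4))
noncomputable def rootPlus (r : ℝ) : ℝ := (r + sqrtDisc r) / 2
noncomputable def rootMinus (r : ℝ) : ℝ := (r - sqrtDisc r) / 2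

section Roots

variable {r : ℝ}

theorem sq_sqrtDisc (hr : 0 ≤ r) : sqrtDisc r ^ 2 = r * (r + 4) :=
  sq_sqrt (by positivity)

theorem sqrtDisc_nonneg (r : ℝ) : 0 ≤ sqrtDisc r := sqrt_nonneg _

theorem sqrtDisc_pos (hr : 0 < r) : 0 < sqrtDisc r := sqrt_pos.2 (by positivity)

theorem rootPlus_add_rootMinus (r : ℝ) : rootPlus r + rootMinus r = r := by
  rw [rootPlus, rootMinus]; ring

theorem rootPlus_sub_rootMinus (r : ℝ) : rootPlus r - rootMinus r = sqrtDisc r := by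
  rw [rootPlus, rootMinus]; ring

theorem rootPlus_mul_rootMinus (hr : 0 ≤ r) : rootPlus r * rootMinus r = -r := by
  rw [rootPlus, rootMinus]; linear_combination -(sq_sqrtDisc hr) / 4

theorem one_lt_sqrtDisc (hr : 1 ≤ r) : 1 < sqrtDisc r :=
  lt_sqrt_of_sq_lt (by nlinarith)

theorem one_lt_rootPlus (hr : 1 ≤ r) : 1 < rootPlus r := by
  have := one_lt_sqrtDisc hr
  rw [rootPlus]; linarith

theorem abs_rootMinus_le_one (hr : 0 ≤ r) : |rootMinus r| ≤ 1 := by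
  have hs := sq_sqrtDisc hr
  have := sqrtDisc_nonneg r
  rw [rootMinus, abs_le]
  constructor <;> nlinarith

theorem fFun_add_one (hr : 0 < r) : fFun (r + 1) = (logb 2 (rootPlus r))⁻¹ := by
  have hx : 0 < rootPlus r := by rw [rootPlus]; linarith [sqrtDisc_nonneg r]
  rw [fFun, show r + 1 - 1 + √((r + 1 - 1) * (r + 1 + 3)) = 2 * rootPlus r by
    rw [rootPlus, sqrtDisc]; ring_nf, logb_mul two_ne_zero hx.ne', logb_self_eq_one one_lt_two,
    add_sub_cancel_left]

theorem gFun_add_one (hr : 0 < r) : gFun (r + 1) = 1 + fFun (r + 1) * logb 2 (sqrtDisc r) := by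
  rw [gFun, add_sub_cancel_right, add_assoc, show (1 : ℝ) + 3 = 4 by norm_num,
    ← logb_mul hr.ne' (by linarith), sqrtDisc, logb, logb, log_sqrt (by positivity)]
  ring

theorem gFun_add_fFun_mul_logb (hr : 0 < r) {t : ℝ} (ht : 0 < t) :
    gFun (r + 1) + fFun (r + 1) * logb 2 t = 1 + logb (rootPlus r) (sqrtDisc r * t) := by
  rw [gFun_add_one hr, fFun_add_one hr, logb_mul (sqrtDisc_pos hr).ne' ht.ne']
  simp only [logb]
  field_simp
  ring

end Roots

theorem le_pow_natCeil_logb {b t : ℝ} (hb : 1 < b) (ht : 0 < t) : t ≤ b ^ ⌈logb b t⌉₊ :=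
  calc t = b ^ logb b t := (rpow_logb (by linarith) hb.ne' ht).symm
    _ ≤ b ^ (⌈logb b t⌉₊ : ℝ) := rpow_le_rpow_of_exponent_le hb.le (Nat.le_ceil _)
    _ = b ^ ⌈logb b t⌉₊ := rpow_natCast b _

theorem le_pairFreeCount {r : ℕ} (hr : 1 ≤ r) {n k : ℕ}
    (h : sqrtDisc r * n ≤ rootPlus r ^ (k + 1)) : n ≤ pairFreeCount r k := by
  have hr' : (1 : ℝ) ≤ r := by exact_mod_cast hr
  have hs := one_lt_sqrtDisc hr'
  have hbinet := pairFreeCount_mul_sub_eq r (rootPlus_add_rootMinus r)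
    (rootPlus_mul_rootMinus (by linarith)) k
  rw [rootPlus_sub_rootMinus] at hbinet
  have hy : rootMinus r ^ (k + 1) ≤ 1 := (le_abs_self _).trans <| by
    rw [abs_pow]; exact pow_le_one₀ (abs_nonneg _) (abs_rootMinus_le_one (by linarith))
  have hlt : ((n : ℝ) - 1) * sqrtDisc r < pairFreeCount r k * sqrtDisc r := by
    rw [hbinet]; nlinarith
  have hn : (n : ℝ) < pairFreeCount r k + 1 := by
    linarith [lt_of_mul_lt_mul_right hlt (by linarith)]
  exact Nat.lt_succ_iff.mp (by exact_mod_cast hn)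

section Words

variable {D : Type} (z : D)

-- The reversals of the prefixes `u` of the words `u ++ [z, z]` of `Sset z (k + 2)`.
def pairFreeWords (k : ℕ) : Set (List D) :=
  {v | v.length = k ∧ (z :: v).IsChain (fun a b => a = z → b ≠ z)}

variable {z}

theorem getElem?_eq_of_take_two_drop {w : List D} {i : ℕ} {a b : D}
    (h : (w.drop i).take 2 = [a, b]) : w[i]? = some a ∧ w[i + 1]? = some b := by
  have h0 := congrArg (·[0]?) h
  have h1 := congrArg (·[1]?) h
  exact ⟨by simpa using h0, by simpa using h1⟩

theorem pairFreeWords_finite [Finite D] (k : ℕ) : (pairFreeWords z k).Finite :=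
  (List.finite_length_eq D k).subset fun _ hv => hv.1

theorem cons_mem_pairFreeWords {c : D} (hc : c ≠ z) {v : List D} {k : ℕ}
    (hv : v ∈ pairFreeWords z (k + 1)) : c :: v ∈ pairFreeWords z (k + 2) := by
  exact ⟨by simp [hv.1], List.isChain_cons_cons.2
    ⟨fun _ => hc, List.isChain_cons.2 ⟨fun _ _ h => absurd h hc, hv.2.tail⟩⟩⟩

theorem cons_cons_mem_pairFreeWords {c : D} (hc : c ≠ z) {v : List D} {k : ℕ}
    (hv : v ∈ pairFreeWords z k) : c :: z :: v ∈ pairFreeWords z (k + 2) := by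
  refine ⟨by simp [hv.1], ?_⟩
  simpa [List.isChain_cons_cons, hc] using hv.2

theorem card_sub_one_le_ncard_pairFreeWords_one [Finite D] :
    Nat.card D - 1 ≤ (pairFreeWords z 1).ncard := by
  have hsub : (fun c => [c]) '' ({z}ᶜ : Set D) ⊆ pairFreeWords z 1 := by
    rintro _ ⟨c, hc, rfl⟩
    exact ⟨rfl, List.isChain_pair.2 fun _ => hc⟩
  calc Nat.card D - 1 = ({z}ᶜ : Set D).ncard := by rw [Set.ncard_compl, Set.ncard_singleton]
    _ = ((fun c => [c]) '' ({z}ᶜ : Set D)).ncard :=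
        (Set.ncard_image_of_injective _ fun _ _ h => List.singleton_inj.1 h).symm
    _ ≤ (pairFreeWords z 1).ncard := Set.ncard_le_ncard hsub (pairFreeWords_finite 1)

theorem card_sub_one_mul_le_ncard_pairFreeWords_add_two [Finite D] (k : ℕ) :
    (Nat.card D - 1) * ((pairFreeWords z (k + 1)).ncard + (pairFreeWords z k).ncard) ≤
      (pairFreeWords z (k + 2)).ncard := by
  set A := (fun p : D × List D => p.1 :: p.2) '' ({z}ᶜ ×ˢ pairFreeWords z (k + 1))
  set B := (fun p : D × List D => p.1 :: z :: p.2) '' ({z}ᶜ ×ˢ pairFreeWords z k)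
  have hsub : A ∪ B ⊆ pairFreeWords z (k + 2) := by
    rintro _ (⟨⟨c, v⟩, ⟨hc, hv⟩, rfl⟩ | ⟨⟨c, v⟩, ⟨hc, hv⟩, rfl⟩)
    · exact cons_mem_pairFreeWords hc hv
    · exact cons_cons_mem_pairFreeWords hc hv
  have hdisj : Disjoint A B := by
    rw [Set.disjoint_left]
    rintro _ ⟨⟨c, v⟩, ⟨-, hv⟩, rfl⟩ ⟨⟨d, u⟩, -, hdu⟩
    simp only [List.cons.injEq] at hdu
    obtain ⟨-, rfl⟩ := hdu
    exact (List.isChain_cons_cons.1 hv.2).1 rfl rfl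
  have hfin : (A ∪ B).Finite := (pairFreeWords_finite (k + 2)).subset hsub
  calc (Nat.card D - 1) * ((pairFreeWords z (k + 1)).ncard + (pairFreeWords z k).ncard)
      = ({z}ᶜ : Set D).ncard * ((pairFreeWords z (k + 1)).ncard + (pairFreeWords z k).ncard) := by
        rw [Set.ncard_compl, Set.ncard_singleton]
    _ = (A ∪ B).ncard := by
        rw [Set.ncard_union_eq hdisj (hfin.subset Set.subset_union_left)
          (hfin.subset Set.subset_union_right), mul_add, ← Set.ncard_prod, ← Set.ncard_prod,
          Set.ncard_image_of_injective _ fun _ _ h => by simpa [Prod.ext_iff] using h,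
          Set.ncard_image_of_injective _ fun _ _ h => by simpa [Prod.ext_iff] using h]
    _ ≤ (pairFreeWords z (k + 2)).ncard := Set.ncard_le_ncard hsub (pairFreeWords_finite _)

theorem pairFreeCount_le_ncard_pairFreeWords [Finite D] (k : ℕ) :
    pairFreeCount (Nat.card D - 1) k ≤ (pairFreeWords z k).ncard := by
  induction k using Nat.twoStepInduction with
  | zero => exact (Set.ncard_pos (pairFreeWords_finite 0)).2 ⟨[], rfl, List.isChain_singleton z⟩
  | one => exact card_sub_one_le_ncard_pairFreeWords_one
  | more k ih₀ ih₁ =>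
    exact (Nat.mul_le_mul_left _ (Nat.add_le_add ih₁ ih₀)).trans
      (card_sub_one_mul_le_ncard_pairFreeWords_add_two k)

theorem reverse_mem_Sset {v : List D} {k : ℕ} (hv : v ∈ pairFreeWords z k) :
    (z :: z :: v).reverse ∈ Sset z (k + 2) := by
  obtain ⟨hlen, hchain⟩ := hv
  have hchain' : (v.reverse ++ [z]).IsChain (fun a b => a = z → b ≠ z) := by
    rw [← List.reverse_cons, List.isChain_reverse]
    exact hchain.imp fun a b h hb ha => h ha hb
  rw [List.reverse_cons, List.reverse_cons]
  refine ⟨by simp [hlen], by simp [hlen], fun i hi htake => ?_⟩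
  by_contra hik
  have hi' : i + 1 < (v.reverse ++ [z]).length := by simp; omega
  obtain ⟨h0, h1⟩ := getElem?_eq_of_take_two_drop htake
  rw [List.getElem?_append_left (by omega), List.getElem?_eq_some_iff] at h0 h1
  exact hchain'.getElem i hi' h0.2 h1.2

theorem ncard_pairFreeWords_le_ncard_Sset [Finite D] (k : ℕ) :
    (pairFreeWords z k).ncard ≤ (Sset z (k + 2)).ncard := by
  rw [← Set.ncard_image_of_injective _ (List.reverse_injective.comp (List.cons_injective.comp
    List.cons_injective))]
  exact Set.ncard_le_ncard (Set.image_subset_iff.2 fun v hv => reverse_mem_Sset hv)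
    ((List.finite_length_eq D _).subset fun _ hw => hw.1)

end Words

/-- For every `n ≥ 2` with `h = |D| < n`, taking
`m = ⌈g(h) + f(h)·log₂ n⌉` one has `|S(m)| ≥ n`. -/
theorem Sset_card_ge {D : Type} [Fintype D] (z : D) (hh : 2 ≤ Fintype.card D) :
    ∀ n : ℕ, 2 ≤ n → Fintype.card D < n →
      n ≤ (Sset z ⌈gFun (Fintype.card D : ℝ) +
              fFun (Fintype.card D : ℝ) * Real.logb 2 (n : ℝ)⌉₊).ncard := by
  intro n hn _
  obtain ⟨r, hr⟩ : ∃ r, Fintype.card D = r + 1 := ⟨Fintype.card D - 1, by omega⟩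
  have hr1 : (1 : ℝ) ≤ r := by exact_mod_cast (show 1 ≤ r by omega)
  have hsn : 1 < sqrtDisc r * n :=
    one_lt_mul_of_lt_of_le (one_lt_sqrtDisc hr1) (by exact_mod_cast (show 1 ≤ n by omega))
  set L := logb (rootPlus r) (sqrtDisc r * n)
  have hL : 0 < ⌈L⌉₊ := Nat.ceil_pos.2 (logb_pos (one_lt_rootPlus hr1) hsn)
  have hm : ⌈gFun (Fintype.card D : ℝ) + fFun (Fintype.card D : ℝ) * logb 2 (n : ℝ)⌉₊ =
      (⌈L⌉₊ - 1) + 2 := by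
    rw [hr, Nat.cast_add_one, gFun_add_fFun_mul_logb (by linarith) (by positivity), add_comm,
      Nat.ceil_add_one (Nat.ceil_pos.1 hL).le]
    omega
  have hcard : Nat.card D - 1 = r := by simp [hr]
  rw [hm]
  calc n ≤ pairFreeCount r (⌈L⌉₊ - 1) := le_pairFreeCount (by omega) <| by
        rw [Nat.sub_add_cancel hL]; exact le_pow_natCeil_logb (one_lt_rootPlus hr1) (by linarith)
    _ ≤ (pairFreeWords z (⌈L⌉₊ - 1)).ncard :=
        hcard ▸ pairFreeCount_le_ncard_pairFreeWords _
    _ ≤ _ := ncard_pairFreeWords_le_ncard_Sset _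
end

section
/- Let M = (Q, A, E, q₀, F) be an NFA with total transition relation and |Q| > 1, let [·] : Q → D^m be a code of length m ≥ 2 extended to paths via the canonical decomposition, and let F_{2m} be the set of all factors of length 2m of words [η'η''η'''] for consecutive m-paths η', η'', η''' of M. Then for every path η of M with |η| ≥ 3m, every factor of [η] of length 2m belongs to F_{2m}. -/
/-- A (nonempty) path of the NFA with transition relation `E`: a nonempty list of
transitions, all in `E`, which are pairwise consecutive. -/
def IsPath {Q A : Type} (E : Set (Q × A × Q)) (η : List (Q × A × Q)) : Prop :=
  η ≠ [] ∧ (∀ e ∈ η, e ∈ E) ∧ List.Chain' (fun e f => e.2.2 = f.1) η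

/-- The origin of a path (as an `Option`, `none` for the empty path). -/
def origState {Q A : Type} (η : List (Q × A × Q)) : Option Q := η.head?.map (fun e => e.1)

/-- The end of a path (as an `Option`, `none` for the empty path). -/
def endState {Q A : Type} (η : List (Q × A × Q)) : Option Q := η.getLast?.map (fun e => e.2.2)

/-- The label of a path. -/
def pathLabel {Q A : Type} (η : List (Q × A × Q)) : List A := η.map (fun e => e.2.1)

/-- The language of the NFA `(Q, A, E, q₀, F)`: labels of paths from `q₀` to a
final state. -/
def nfaLang {Q A : Type} (E : Set (Q × A × Q)) (q0 : Q) (F : Set Q) : Set (List A) :=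
  {w | ∃ η, IsPath E η ∧ origState η = some q0 ∧ (∃ q ∈ F, endState η = some q) ∧
    w = pathLabel η}

/-- The transition relation `E` is total. -/
def TotalRel {Q A : Type} (E : Set (Q × A × Q)) : Prop := ∀ q a, ∃ p, (q, a, p) ∈ E

/-- Encoding of a path `η` of length `≤ m`: the unique word `z ∈ (A × D)^{|η|}`
whose `A`-projection is the label of `η` and whose `D`-projection is the prefix
of length `|η|` of the codeword of the origin of `η` (the empty path encodes to
the empty word). -/
def encShort {Q A D : Type} (c : Q → List D) : List (Q × A × Q) → List (A × D)
  | [] => []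
  | e :: t => (pathLabel (e :: t)).zip (c e.1)

/-- Encoding `[η]` of an arbitrary path `η`, obtained by encoding blockwise the
canonical decomposition of `η` into consecutive `m`-paths followed by one final
path of length `< m`. -/
def encPath {Q A D : Type} (c : Q → List D) (m : ℕ) (η : List (Q × A × Q)) :
    List (A × D) :=
  if h : η.length ≤ m ∨ m = 0 then encShort c η
  else encShort c (η.take m) ++ encPath c m (η.drop m)
termination_by η.length
decreasing_by
  push_neg at h
  simp only [List.length_drop]
  omega

/-- The set `F_{2m}` of the path-encoding construction: all factors of length
`2m` of the encodings `[η'η''η''']` of three consecutive `m`-paths. -/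
def Fset {Q A D : Type} (E : Set (Q × A × Q)) (c : Q → List D) (m : ℕ) :
    Set (List (A × D)) :=
  {w | ∃ η₁ η₂ η₃ : List (Q × A × Q),
    IsPath E (η₁ ++ η₂ ++ η₃) ∧ η₁.length = m ∧ η₂.length = m ∧ η₃.length = m ∧
    w.length = 2 * m ∧ w <:+: encPath c m (η₁ ++ η₂ ++ η₃)}

/-- The set `I_{2m-1}` of the path-encoding construction: prefixes of length
`2m-1` of the encodings `[η'η'']` of two consecutive `m`-paths with
`δ([η']) = [q₀]`. -/
def Iset {Q A D : Type} (E : Set (Q × A × Q)) (q0 : Q) (c : Q → List D) (m : ℕ) :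
    Set (List (A × D)) :=
  {w | ∃ η₁ η₂ : List (Q × A × Q),
    IsPath E (η₁ ++ η₂) ∧ η₁.length = m ∧ η₂.length = m ∧
    (encPath c m η₁).map Prod.snd = c q0 ∧
    w = (encPath c m (η₁ ++ η₂)).take (2 * m - 1)}

/-- The set `T_{2m-1}` of the path-encoding construction: suffixes of length
`2m-1` of the encodings `[η'η''η''']` of consecutive paths with `|η'| = |η''| = m`,
`0 ≤ |η'''| < m` and `e(η''η''') ∈ F`. -/
def Tset {Q A D : Type} (E : Set (Q × A × Q)) (F : Set Q) (c : Q → List D) (m : ℕ) :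
    Set (List (A × D)) :=
  {w | ∃ η₁ η₂ η₃ : List (Q × A × Q),
    IsPath E (η₁ ++ η₂ ++ η₃) ∧ η₁.length = m ∧ η₂.length = m ∧ η₃.length < m ∧
    (∃ q ∈ F, endState (η₂ ++ η₃) = some q) ∧
    w = (encPath c m (η₁ ++ η₂ ++ η₃)).drop
      ((encPath c m (η₁ ++ η₂ ++ η₃)).length - (2 * m - 1))}
/-!
Extend `η` by `m` further transitions, which totality of `E` allows. A factor of `[η]` of
length `2m` starting at position `p` then lies inside the window of `[ηξ]` between the block
boundaries `⌊p/m⌋m` and `⌊p/m⌋m + 3m` (without the extension this window may overrun `[η]`).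
Since the encoding is computed block by block, that window is the encoding of the three
consecutive `m`-paths cut out of `ηξ` at the same positions.
-/

theorem List.take_zip_left {α β : Type*} :
    ∀ (l : List α) (z : List β) (n : ℕ), (l.take n).zip z = (l.zip z).take n
  | [], _, _ => by simp
  | _ :: _, [], _ => by simp
  | _ :: _, _ :: _, 0 => by simp
  | _ :: l, _ :: z, n + 1 => by simp [List.take_zip_left l z n]

theorem List.infix_take_drop_of_prefix {α : Type*} {pre y L : List α} (h : pre ++ y <+: L)
    {k n : ℕ} (hk : k ≤ pre.length) (hn : pre.length + y.length ≤ k + n) :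
    y <:+: (L.drop k).take n := by
  obtain ⟨s, rfl⟩ := h
  have hwin : pre.drop k ++ y <+: ((pre ++ y ++ s).drop k).take n := by
    rw [List.prefix_take_iff, List.append_assoc, List.drop_append_of_le_length hk,
      ← List.append_assoc]
    exact ⟨List.prefix_append _ _, by simp; omega⟩
  exact (List.suffix_append _ _).isInfix.trans hwin.isInfix

section Paths

variable {Q A : Type} {E : Set (Q × A × Q)}

theorem IsPath.infix {η ξ : List (Q × A × Q)} (hη : IsPath E η) (hξ : ξ <:+: η) (hne : ξ ≠ []) :
    IsPath E ξ :=
  ⟨hne, fun e he => hη.2.1 e (hξ.subset he), hη.2.2.infix hξ⟩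

theorem IsPath.append_singleton {η : List (Q × A × Q)} (hη : IsPath E η) {e : Q × A × Q}
    (he : e ∈ E) (horig : e.1 = (η.getLast hη.1).2.2) : IsPath E (η ++ [e]) := by
  refine ⟨by simp, ?_, hη.2.2.append (List.isChain_singleton e) ?_⟩
  · intro x hx
    rcases List.mem_append.mp hx with hx | hx
    exacts [hη.2.1 x hx, List.eq_of_mem_singleton hx ▸ he]
  · simp [List.getLast?_eq_some_getLast hη.1, horig]

theorem TotalRel.exists_isPath_append (hTot : TotalRel E) {η : List (Q × A × Q)}
    (hη : IsPath E η) : ∀ n : ℕ, ∃ ξ : List (Q × A × Q), ξ.length = n ∧ IsPath E (η ++ ξ)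
  | 0 => ⟨[], rfl, by simpa using hη⟩
  | n + 1 => by
    obtain ⟨ξ, hlen, hpath⟩ := hTot.exists_isPath_append hη n
    let last := (η ++ ξ).getLast hpath.1
    obtain ⟨p, hp⟩ := hTot last.2.2 last.2.1
    exact ⟨ξ ++ [(last.2.2, last.2.1, p)], by simp [hlen],
      by simpa using hpath.append_singleton hp rfl⟩

end Paths

section Encoding

variable {Q A D : Type} {c : Q → List D} {m : ℕ}

theorem encShort_take (c : Q → List D) :
    ∀ (η : List (Q × A × Q)) (n : ℕ), encShort c (η.take n) = (encShort c η).take n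
  | [], _ => by simp [encShort]
  | _ :: _, 0 => by simp [encShort]
  | _ :: η, n + 1 => by
    simp only [List.take_succ_cons, encShort, pathLabel, ← List.map_take, ← List.take_zip_left]

theorem length_encShort (hlen : ∀ q, (c q).length = m) (η : List (Q × A × Q)) :
    (encShort c η).length = min η.length m := by
  cases η <;> simp [encShort, pathLabel, hlen]

theorem encPath_of_length_le {η : List (Q × A × Q)} (h : η.length ≤ m) :
    encPath c m η = encShort c η := by
  rw [encPath, dif_pos (Or.inl h)]

theorem encPath_of_lt_length (hm : 0 < m) {η : List (Q × A × Q)} (h : m < η.length) :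
    encPath c m η = encShort c (η.take m) ++ encPath c m (η.drop m) := by
  rw [encPath, dif_neg (by omega)]

@[simp]
theorem encPath_nil : encPath c m ([] : List (Q × A × Q)) = [] := by
  rw [encPath_of_length_le (Nat.zero_le m)]
  rfl

theorem length_encShort_take (hlen : ∀ q, (c q).length = m) {η : List (Q × A × Q)}
    (h : m ≤ η.length) : (encShort c (η.take m)).length = m := by
  simp [length_encShort hlen, h]

variable (hm : 0 < m) (hlen : ∀ q, (c q).length = m)
include hm hlen

theorem length_encPath (η : List (Q × A × Q)) : (encPath c m η).length = η.length := by
  by_cases h : η.length ≤ m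
  · rw [encPath_of_length_le h, length_encShort hlen, min_eq_left h]
  · rw [encPath_of_lt_length hm (by omega), List.length_append,
      length_encShort_take hlen (by omega), length_encPath (η.drop m), List.length_drop]
    omega
termination_by η.length

theorem encPath_take (η : List (Q × A × Q)) (n : ℕ) :
    encPath c m (η.take n) = (encPath c m η).take n := by
  by_cases hη : η.length ≤ m
  · rw [encPath_of_length_le (by simp; omega), encPath_of_length_le hη, encShort_take]
  have hblock := length_encShort_take hlen (η := η) (by omega)
  rw [encPath_of_lt_length hm (η := η) (by omega), List.take_append, hblock]
  by_cases hn : n ≤ m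
  · rw [encPath_of_length_le (by rw [List.length_take]; omega), Nat.sub_eq_zero_of_le hn,
      List.take_zero, List.append_nil, ← encShort_take, List.take_take, min_eq_left hn]
  · rw [encPath_of_lt_length hm (by rw [List.length_take]; omega), List.take_take,
      min_eq_left (by omega), List.drop_take, encPath_take (η.drop m) (n - m),
      List.take_of_length_le (l := encShort c (η.take m)) (by omega)]
termination_by η.length

theorem encPath_drop_mul (k : ℕ) (η : List (Q × A × Q)) :
    encPath c m (η.drop (k * m)) = (encPath c m η).drop (k * m) := by
  induction k generalizing η with
  | zero => simp
  | succ k ih =>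
    rw [Nat.succ_mul, ← List.drop_drop, ← List.drop_drop, ← ih]
    by_cases hη : (η.drop (k * m)).length ≤ m
    · rw [List.drop_eq_nil_of_le hη, encPath_nil, List.drop_eq_nil_of_le]
      rwa [length_encPath hm hlen]
    · rw [encPath_of_lt_length hm (by omega) (η := η.drop (k * m)),
        List.drop_left' (length_encShort_take hlen (by omega))]

theorem encPath_prefix_append (η ξ : List (Q × A × Q)) :
    encPath c m η <+: encPath c m (η ++ ξ) := by
  have h := encPath_take hm hlen (η ++ ξ) η.length
  rw [List.take_left] at h
  exact h ▸ List.take_prefix _ _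

end Encoding

theorem mem_Fset_of_isPath {Q A D : Type} {E : Set (Q × A × Q)} {c : Q → List D} {m : ℕ}
    {η : List (Q × A × Q)} (hη : IsPath E η) (hlen : η.length = 3 * m) {y : List (A × D)}
    (hy : y.length = 2 * m) (hyη : y <:+: encPath c m η) : y ∈ Fset E c m := by
  have hsplit : η.take m ++ (η.drop m).take m ++ η.drop (2 * m) = η := by
    rw [List.append_assoc, show 2 * m = m + m by omega, ← List.drop_drop,
      List.take_append_drop, List.take_append_drop]
  refine ⟨η.take m, (η.drop m).take m, η.drop (2 * m), by rwa [hsplit], ?_, ?_, ?_, hy,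
    by rwa [hsplit]⟩ <;> simp <;> omega

theorem factors_of_encoded_path_general {Q A D : Type}
    (E : Set (Q × A × Q)) (hTot : TotalRel E)
    (m : ℕ) (hm : 2 ≤ m) (c : Q → List D) (hc : IsCode m c) :
    ∀ η : List (Q × A × Q), IsPath E η → 3 * m ≤ η.length →
      ∀ y : List (A × D), y.length = 2 * m → y <:+: encPath c m η →
        y ∈ Fset E c m := by
  intro η hη h3m y hy ⟨pre, suf, hsplit⟩
  have hm0 : 0 < m := by omega
  have hpos : pre.length + 2 * m ≤ η.length := by
    have := congrArg List.length hsplit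
    simp only [List.length_append, hy, length_encPath hm0 hc.2] at this
    omega
  obtain ⟨ξ, hξ, hηξ⟩ := hTot.exists_isPath_append hη m
  have hpre : pre ++ y <+: encPath c m (η ++ ξ) :=
    List.IsPrefix.trans ⟨suf, hsplit⟩ (encPath_prefix_append hm0 hc.2 η ξ)
  set K := pre.length / m * m
  have hK : K ≤ pre.length ∧ pre.length < K + m :=
    ⟨Nat.div_mul_le_self _ _, Nat.lt_div_mul_add hm0⟩
  set B := ((η ++ ξ).drop K).take (3 * m)
  have hB : B.length = 3 * m := by simp [B, hξ]; omega
  refine mem_Fset_of_isPath (hηξ.infix ?_ ?_) hB hy ?_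
  · exact (List.take_prefix _ _).isInfix.trans (List.drop_suffix _ _).isInfix
  · intro h; simp [h] at hB; omega
  · rw [encPath_take hm0 hc.2, encPath_drop_mul hm0 hc.2]
    exact List.infix_take_drop_of_prefix hpre hK.1 (by omega)

/-- **claim (*).** For every path `η` of `M` with `|η| ≥ 3m`,
every factor of `[η]` of length `2m` belongs to `F_{2m}`. -/
theorem factors_of_encoded_path {Q A D : Type} [Fintype Q]
    (E : Set (Q × A × Q)) (q0 : Q) (F : Set Q) (hq0 : q0 ∉ F)
    (hTot : TotalRel E) (hn : 1 < Fintype.card Q)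
    (m : ℕ) (hm : 2 ≤ m) (c : Q → List D) (hc : IsCode m c) :
    ∀ η : List (Q × A × Q), IsPath E η → 3 * m ≤ η.length →
      ∀ y : List (A × D), y.length = 2 * m → y <:+: encPath c m η →
        y ∈ Fset E c m :=
  factors_of_encoded_path_general E hTot m hm c hc
end

section
/- Both f and g are strictly monotonically decreasing on [2, ∞): for all real h, h' with 2 ≤ h < h', one has f(h') < f(h) and g(h') < g(h). -/
/-!
Write `x = h - 1 + t` with `t = √((h - 1)(h + 3))`, so that `f = 1 / (log₂ x - 1)`. Since
`t² = (h - 1)² + 4(h - 1)`, one checks `2 (x + 2) t = x (x + 4)`, hence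
`log₂ (h - 1) + log₂ (h + 3) = 2 log₂ t = 2 (log₂ x - 1 + log₂ ((x + 4) / (x + 2)))` and
`g = 2 + f · log₂ ((x + 4) / (x + 2))`. As `h` grows, `x > 2` grows, so `f > 0` decreases and
the positive factor `log₂ ((x + 4) / (x + 2))` decreases too.
-/

open Real Set

noncomputable def fArg (h : ℝ) : ℝ := h - 1 + Real.sqrt ((h - 1) * (h + 3))

lemma fFun_eq_inv (h : ℝ) : fFun h = (logb 2 (fArg h) - 1)⁻¹ := rfl

lemma fArg_strictMonoOn : StrictMonoOn fArg (Ici (-1)) := by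
  intro h hh h' _ hlt
  have hsqrt : Real.sqrt ((h - 1) * (h + 3)) ≤ Real.sqrt ((h' - 1) * (h' + 3)) :=
    Real.sqrt_le_sqrt (by simp only [mem_Ici] at hh; nlinarith)
  unfold fArg
  linarith

lemma two_lt_fArg {h : ℝ} (hh : 2 ≤ h) : 2 < fArg h := by
  have hsqrt : Real.sqrt 5 ≤ Real.sqrt ((h - 1) * (h + 3)) := Real.sqrt_le_sqrt (by nlinarith)
  have hsqrt5 : 2 < Real.sqrt 5 := by
    rw [show (2 : ℝ) = Real.sqrt (2 ^ 2) by simp]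
    exact Real.sqrt_lt_sqrt (by norm_num) (by norm_num)
  unfold fArg
  linarith

lemma one_lt_logb_fArg {h : ℝ} (hh : 2 ≤ h) : 1 < logb 2 (fArg h) := by
  simpa using logb_lt_logb (b := 2) one_lt_two two_pos (two_lt_fArg hh)

lemma fFun_pos {h : ℝ} (hh : 2 ≤ h) : 0 < fFun h := by
  rw [fFun_eq_inv]
  exact inv_pos.2 (sub_pos.2 (one_lt_logb_fArg hh))

lemma fArg_strictMonoOn_Ici_two : StrictMonoOn fArg (Ici 2) :=
  fArg_strictMonoOn.mono (Ici_subset_Ici.2 (by norm_num))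

lemma fFun_strictAntiOn : StrictAntiOn fFun (Ici 2) := by
  intro h hh h' hh' hlt
  have hL := logb_lt_logb one_lt_two (by linarith [two_lt_fArg hh])
    (fArg_strictMonoOn_Ici_two hh hh' hlt)
  rw [fFun_eq_inv, fFun_eq_inv]
  exact inv_strictAnti₀ (sub_pos.2 (one_lt_logb_fArg hh)) (by linarith)

lemma two_mul_fArg_add_two_mul_sqrt {h : ℝ} (hh : 0 ≤ (h - 1) * (h + 3)) :
    2 * (fArg h + 2) * Real.sqrt ((h - 1) * (h + 3)) = fArg h * (fArg h + 4) := by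
  have ht := Real.sq_sqrt hh
  unfold fArg
  linear_combination ht

lemma gFun_eq {h : ℝ} (h1 : 1 < h) (hL : logb 2 (fArg h) ≠ 1) :
    gFun h = 2 + fFun h * logb 2 ((fArg h + 4) / (fArg h + 2)) := by
  set t := Real.sqrt ((h - 1) * (h + 3)) with ht
  have hpos : 0 < (h - 1) * (h + 3) := by nlinarith
  have htpos : 0 < t := Real.sqrt_pos.2 hpos
  have hxpos : 0 < fArg h := by unfold fArg; linarith
  have hsum : logb 2 (h - 1) + logb 2 (h + 3) = 2 * logb 2 t := by
    rw [← logb_mul (by linarith) (by linarith), ← Real.sq_sqrt hpos.le, ← ht, logb_pow]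
    norm_num
  have hlogt : logb 2 t = logb 2 (fArg h) - 1 + logb 2 ((fArg h + 4) / (fArg h + 2)) := by
    have hteq : t = fArg h * ((fArg h + 4) / (fArg h + 2)) / 2 := by
      rw [eq_div_iff two_ne_zero, mul_div_assoc', eq_div_iff (by positivity),
        ← two_mul_fArg_add_two_mul_sqrt hpos.le]
      ring
    rw [hteq, logb_div (by positivity) two_ne_zero, logb_mul hxpos.ne' (by positivity),
      logb_self_eq_one one_lt_two]
    ring
  have hL' : logb 2 (fArg h) - 1 ≠ 0 := sub_ne_zero.2 hL
  rw [gFun, hsum, hlogt, fFun_eq_inv]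
  field_simp
  ring

lemma logb_add_four_div_add_two_strictAntiOn :
    StrictAntiOn (fun x : ℝ => logb 2 ((x + 4) / (x + 2))) (Ioi (-2)) := by
  intro x hx y hy hxy
  simp only [mem_Ioi] at hx hy
  apply logb_lt_logb one_lt_two (by apply div_pos <;> linarith)
  rw [div_lt_div_iff₀ (by linarith) (by linarith)]
  nlinarith

lemma gFun_strictAntiOn : StrictAntiOn gFun (Ici 2) := by
  intro h hh h' hh' hlt
  have hx := two_lt_fArg hh
  have hx' := two_lt_fArg hh'
  rw [gFun_eq (by linarith [mem_Ici.1 hh]) (one_lt_logb_fArg hh).ne',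
    gFun_eq (by linarith [mem_Ici.1 hh']) (one_lt_logb_fArg hh').ne']
  have hr := logb_add_four_div_add_two_strictAntiOn (mem_Ioi.2 (by linarith))
    (mem_Ioi.2 (by linarith)) (fArg_strictMonoOn_Ici_two hh hh' hlt)
  have hr0 : 0 ≤ logb 2 ((fArg h' + 4) / (fArg h' + 2)) :=
    (logb_pos one_lt_two ((one_lt_div (by linarith)).2 (by linarith))).le
  linarith [mul_lt_mul'' (fFun_strictAntiOn hh hh' hlt) hr (fFun_pos hh').le hr0]

/-- Both `f` and `g` are strictly decreasing on `[2, ∞)`. -/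
theorem fFun_gFun_strict_anti :
    ∀ h h' : ℝ, 2 ≤ h → h < h' → fFun h' < fFun h ∧ gFun h' < gFun h := by
  intro h h' hh hlt
  have hh' : h' ∈ Ici 2 := mem_Ici.2 (by linarith)
  exact ⟨fFun_strictAntiOn hh hh' hlt, gFun_strictAntiOn hh hh' hlt⟩
end
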